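/- Let K' = {z ∈ ℂ : |z| ≤ 1} be the closed unit disk, let ν be normalized arclength measure dθ/2π on the unit circle, and let Q(z) = |z|². Then (K', ν, Q) does not satisfy the weighted Bernstein–Markov property. In fact, for the monomials p_k(z) = z^k one has sup_{z ∈ K'} |z|^k e^{-k|z|²} = (2e)^{-k/2} and (∫ |z|^{2k} e^{-2k|z|²} dν)^{1/2} = e^{-k}, so the ratio of the weighted sup norm to the weighted L²(ν) norm equals (e/2)^{k/2}, whose k-th root is √(e/2) > 1 for all k. -/

import Mathlib

/-!
The measure `ν` lives on the unit circle, where `Q ≡ 1`, so the weighted `L²(ν)` norm of `z^k` is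
`e^{-k}`. On the disk, `|z|^k e^{-k|z|²} = (r e^{-r²})^k` with `r = |z|`, and `r e^{-r²}` is
maximal at `r = 1/√2`, with value `(2e)^{-1/2}`. The ratio of the two norms is therefore
`√(e/2)^k`, which outgrows `C (1 + ε)^k` as soon as `1 + ε < √(e/2)`.
-/

open MeasureTheory

/-- Normalized arclength measure `dθ/2π` on the unit circle in `ℂ`. -/
noncomputable def arcMeasure : Measure ℂ :=
  (ENNReal.ofReal (2 * Real.pi))⁻¹ •
    Measure.map (fun θ : ℝ => Complex.exp (θ * Complex.I))
      (volume.restrict (Set.Ico 0 (2 * Real.pi)))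

/-- `(K, ν, Q)` satisfies the weighted Bernstein–Markov property (with `w = e^{-Q}`):
for every `ε > 0` there is `C > 0` such that for every `k ≥ 1` and every polynomial `p`
of degree at most `k`, `sup_{z ∈ K} |p(z)| w(z)^k ≤ C (1+ε)^k (∫_K |p|² w^{2k} dν)^{1/2}`. -/
def WeightedBernsteinMarkov (K : Set ℂ) (ν : Measure ℂ) (Q : ℂ → ℝ) : Prop :=
  ∀ ε : ℝ, 0 < ε → ∃ C : ℝ, 0 < C ∧ ∀ k : ℕ, 1 ≤ k → ∀ p : Polynomial ℂ,
    p.natDegree ≤ k → ∀ z ∈ K,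
      ‖p.eval z‖ * Real.exp (-Q z) ^ k ≤
        C * (1 + ε) ^ k *
          Real.sqrt (∫ w in K, ‖p.eval w‖ ^ 2 * Real.exp (-Q w) ^ (2 * k) ∂ν)

open Real

instance isProbabilityMeasure_arcMeasure : IsProbabilityMeasure arcMeasure := by
  constructor
  have hmeas : Measurable (fun θ : ℝ => Complex.exp (θ * Complex.I)) := by fun_prop
  rw [arcMeasure, Measure.smul_apply, Measure.map_apply hmeas MeasurableSet.univ,
    Set.preimage_univ, Measure.restrict_apply_univ, volume_Ico, sub_zero, smul_eq_mul,
    ENNReal.inv_mul_cancel (by simp [pi_pos]) ENNReal.ofReal_ne_top]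

lemma ae_arcMeasure_norm_eq_one : ∀ᵐ z ∂arcMeasure, ‖z‖ = 1 := by
  refine Measure.ae_smul_measure ?_ _
  rw [ae_map_iff (by fun_prop) (measurableSet_eq_fun (by fun_prop) (by fun_prop))]
  exact Filter.Eventually.of_forall fun θ => by simp [Complex.norm_exp]

lemma integral_arcMeasure_norm_comp (g : ℝ → ℝ) : ∫ z, g ‖z‖ ∂arcMeasure = g 1 := by
  rw [integral_congr_ae (ae_arcMeasure_norm_eq_one.mono fun z hz => by rw [hz]),
    integral_const, probReal_univ, one_smul]

lemma arcMeasure_restrict_eq_self_of_sphere_subset {K : Set ℂ}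
    (hK : Metric.sphere 0 1 ⊆ K) : arcMeasure.restrict K = arcMeasure :=
  Measure.restrict_eq_self_of_ae_mem <| ae_arcMeasure_norm_eq_one.mono fun z hz =>
    hK (by simpa using hz)

lemma sqrt_setIntegral_arcMeasure_norm_pow_mul_exp_neg_sq_pow (k : ℕ) :
    √(∫ z in {z : ℂ | ‖z‖ ≤ 1}, ‖z‖ ^ (2 * k) * exp (-‖z‖ ^ 2) ^ (2 * k) ∂arcMeasure) =
      exp (-(k : ℝ)) := by
  have hsphere : Metric.sphere (0 : ℂ) 1 ⊆ {z : ℂ | ‖z‖ ≤ 1} := fun z hz =>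
    (mem_sphere_zero_iff_norm.mp hz).le
  rw [arcMeasure_restrict_eq_self_of_sphere_subset hsphere,
    integral_arcMeasure_norm_comp fun r => r ^ (2 * k) * exp (-r ^ 2) ^ (2 * k),
    one_pow, one_pow, one_mul, pow_mul', sqrt_sq (by positivity), ← exp_nat_mul]
  ring_nf

lemma mul_exp_neg_sq_le (r : ℝ) : r * exp (-r ^ 2) ≤ (√(2 * exp 1))⁻¹ := by
  -- `√2 r ≤ r² + 1/2` is AM-GM, and `r² + 1/2 ≤ exp (r² - 1/2)` is `x + 1 ≤ exp x`.
  have key : √2 * r ≤ exp (r ^ 2 - 1 / 2) := by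
    have h2 : √2 ^ 2 = 2 := sq_sqrt zero_le_two
    nlinarith [sq_nonneg (√2 * r - 1), add_one_le_exp (r ^ 2 - 1 / 2)]
  have hmul : r * exp (-r ^ 2) * √2 ≤ exp (-(1 / 2)) :=
    calc r * exp (-r ^ 2) * √2 = √2 * r * exp (-r ^ 2) := by ring
      _ ≤ exp (r ^ 2 - 1 / 2) * exp (-r ^ 2) := by gcongr
      _ = exp (-(1 / 2)) := by rw [← exp_add]; ring_nf
  rwa [sqrt_mul zero_le_two, ← exp_half, mul_inv, ← exp_neg, inv_mul_eq_div,
    le_div_iff₀ (by positivity)]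

lemma inv_sqrt_two_mul_exp_neg_sq :
    (√2)⁻¹ * exp (-(√2)⁻¹ ^ 2) = (√(2 * exp 1))⁻¹ := by
  rw [inv_pow, sq_sqrt zero_le_two, sqrt_mul zero_le_two, ← exp_half, mul_inv, ← exp_neg]
  norm_num

lemma isGreatest_norm_pow_mul_exp_neg_sq_pow (k : ℕ) :
    IsGreatest ((fun z : ℂ => ‖z‖ ^ k * exp (-‖z‖ ^ 2) ^ k) '' {z : ℂ | ‖z‖ ≤ 1})
      ((√(2 * exp 1))⁻¹ ^ k) := by
  have hnorm : ‖(((√2)⁻¹ : ℝ) : ℂ)‖ = (√2)⁻¹ := by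
    rw [Complex.norm_real, norm_of_nonneg (by positivity)]
  refine ⟨⟨((√2)⁻¹ : ℝ), ?_, ?_⟩, ?_⟩
  · simp only [Set.mem_ofPred_eq, hnorm]
    exact inv_le_one_of_one_le₀ (one_le_sqrt.mpr one_le_two)
  · simp only [hnorm, ← mul_pow, inv_sqrt_two_mul_exp_neg_sq]
  · rintro _ ⟨z, -, rfl⟩
    simp only [← mul_pow]
    exact pow_le_pow_left₀ (by positivity) (mul_exp_neg_sq_le ‖z‖) k

lemma rpow_natCast_div_two {x : ℝ} (hx : 0 ≤ x) (k : ℕ) : x ^ ((k : ℝ) / 2) = √x ^ k := by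
  rw [sqrt_eq_rpow, ← rpow_natCast, ← rpow_mul hx]
  ring_nf

lemma rpow_neg_natCast_div_two {x : ℝ} (hx : 0 ≤ x) (k : ℕ) :
    x ^ (-(k : ℝ) / 2) = (√x)⁻¹ ^ k := by
  rw [neg_div, rpow_neg hx, rpow_natCast_div_two hx, inv_pow]

lemma rpow_div_two_rpow_one_div {x : ℝ} (hx : 0 ≤ x) {t : ℝ} (ht : t ≠ 0) :
    (x ^ (t / 2)) ^ (1 / t) = √x := by
  rw [← rpow_mul hx, sqrt_eq_rpow]
  field_simp

lemma sqrt_exp_one_div_two_mul_exp_neg_one : √(exp 1 / 2) * exp (-1) = (√(2 * exp 1))⁻¹ := by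
  rw [exp_neg, ← sqrt_inv, ← sqrt_sq (inv_nonneg.mpr (exp_pos 1).le), ← sqrt_mul (by positivity)]
  congr 1
  field_simp

lemma one_lt_sqrt_exp_one_div_two : 1 < √(exp 1 / 2) :=
  lt_sqrt_of_sq_lt (by linarith [exp_one_gt_d9])

lemma le_of_forall_pow_le_mul_pow {a b C : ℝ} (hb : 0 < b)
    (h : ∀ k : ℕ, 1 ≤ k → a ^ k ≤ C * b ^ k) : a ≤ b := by
  by_contra! hab
  have hratio : 1 < a / b := (one_lt_div hb).mpr hab
  obtain ⟨n, hn⟩ := pow_unbounded_of_one_lt C hratio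
  have hle : (a / b) ^ (n + 1) ≤ C := by
    rw [div_pow, div_le_iff₀ (by positivity)]
    exact h (n + 1) n.succ_pos
  linarith [pow_le_pow_right₀ hratio.le (n.le_add_right 1)]

lemma not_weightedBernsteinMarkov_of_pow_mul_le {K : Set ℂ} {ν : Measure ℂ} {Q : ℂ → ℝ}
    {a : ℝ} (ha : 1 < a)
    (h : ∀ k : ℕ, 1 ≤ k → ∃ p : Polynomial ℂ, p.natDegree ≤ k ∧ ∃ z ∈ K,
      0 < √(∫ w in K, ‖p.eval w‖ ^ 2 * exp (-Q w) ^ (2 * k) ∂ν) ∧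
      a ^ k * √(∫ w in K, ‖p.eval w‖ ^ 2 * exp (-Q w) ^ (2 * k) ∂ν) ≤
        ‖p.eval z‖ * exp (-Q z) ^ k) :
    ¬ WeightedBernsteinMarkov K ν Q := by
  intro hBM
  obtain ⟨C, -, hC⟩ := hBM ((a - 1) / 2) (by linarith)
  have : a ≤ 1 + (a - 1) / 2 := le_of_forall_pow_le_mul_pow (by linarith) fun k hk => by
    obtain ⟨p, hp, z, hz, hpos, hle⟩ := h k hk
    exact le_of_mul_le_mul_right (hle.trans (hC k hk p hp z hz)) hpos
  linarith

theorem disk_not_weighted_bernstein_markov :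
    ¬ WeightedBernsteinMarkov {z : ℂ | ‖z‖ ≤ 1} arcMeasure (fun z => ‖z‖ ^ 2) ∧
    (∀ k : ℕ, 1 ≤ k →
      sSup ((fun z : ℂ => ‖z‖ ^ k * Real.exp (-‖z‖ ^ 2) ^ k) '' {z : ℂ | ‖z‖ ≤ 1}) =
        (2 * Real.exp 1) ^ (-(k : ℝ) / 2)) ∧
    (∀ k : ℕ, 1 ≤ k →
      Real.sqrt (∫ z in {z : ℂ | ‖z‖ ≤ 1},
          ‖z‖ ^ (2 * k) * Real.exp (-‖z‖ ^ 2) ^ (2 * k) ∂arcMeasure) =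
        Real.exp (-(k : ℝ))) ∧
    (∀ k : ℕ, 1 ≤ k →
      (2 * Real.exp 1) ^ (-(k : ℝ) / 2) / Real.exp (-(k : ℝ)) =
        (Real.exp 1 / 2) ^ ((k : ℝ) / 2) ∧
      ((Real.exp 1 / 2) ^ ((k : ℝ) / 2)) ^ ((1 : ℝ) / (k : ℝ)) =
        Real.sqrt (Real.exp 1 / 2)) ∧
    1 < Real.sqrt (Real.exp 1 / 2) := by
  have hexp_neg (k : ℕ) : exp (-(k : ℝ)) = exp (-1) ^ k := by
    rw [← exp_nat_mul]; ring_nf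
  refine ⟨not_weightedBernsteinMarkov_of_pow_mul_le one_lt_sqrt_exp_one_div_two fun k _ => ?_,
    fun k _ => by
      rw [rpow_neg_natCast_div_two (by positivity)]
      exact (isGreatest_norm_pow_mul_exp_neg_sq_pow k).csSup_eq,
    fun k _ => sqrt_setIntegral_arcMeasure_norm_pow_mul_exp_neg_sq_pow k,
    fun k hk => ⟨?_, rpow_div_two_rpow_one_div (by positivity) (by positivity)⟩,
    one_lt_sqrt_exp_one_div_two⟩
  · obtain ⟨z, hz, hmax⟩ := (isGreatest_norm_pow_mul_exp_neg_sq_pow k).1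
    refine ⟨.X ^ k, (Polynomial.natDegree_X_pow k).le, z, hz, ?_⟩
    simp only [Polynomial.eval_pow, Polynomial.eval_X, norm_pow, ← pow_mul, mul_comm k 2]
    rw [sqrt_setIntegral_arcMeasure_norm_pow_mul_exp_neg_sq_pow]
    refine ⟨exp_pos _, ?_⟩
    rw [hexp_neg, ← mul_pow, sqrt_exp_one_div_two_mul_exp_neg_one]
    exact hmax.ge
  · rw [rpow_neg_natCast_div_two (by positivity), rpow_natCast_div_two (by positivity), hexp_neg,
      ← div_pow, ← sqrt_exp_one_div_two_mul_exp_neg_one, mul_div_cancel_right₀ _ (exp_pos _).ne']
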